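/- arXiv:2103.00434 — 7 statements merged into one kernel-verified Lean document; each statement's English description precedes it below -/
import Mathlib

section
/- The volumetric center (minimizer of the volumetric barrier) of the simplex P_0 = {x ∈ ℝ^n : x_j ≥ -R for all j, and Σ_j x_j ≤ nR} is the point ω·𝟏_n where ω = ((n-1)/(n+1))·R. -/
lemma amgm_pow {m : ℕ} (hm : 0 < m) (z : Fin m → ℝ) (hz : ∀ i, 0 ≤ z i) :
    (m : ℝ) ^ m * ∏ i, z i ≤ (∑ i, z i) ^ m := by
  have hm' : (0:ℝ) < m := by exact_mod_cast hm
  have hgm := Real.geom_mean_le_arith_mean_weighted Finset.univ (fun _ => (m:ℝ)⁻¹) z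
    (fun i _ => by positivity) (by simp [Finset.card_univ]; field_simp) (fun i _ => hz i)
  have hL : (∏ i, z i ^ ((m:ℝ)⁻¹)) ^ m = ∏ i, z i := by
    rw [← Finset.prod_pow]
    refine Finset.prod_congr rfl fun i _ => ?_
    rw [← Real.rpow_natCast (z i ^ ((m:ℝ)⁻¹)) m, ← Real.rpow_mul (hz i)]
    simp [inv_mul_cancel₀ (ne_of_gt hm')]
  have hR : (∑ i, (m:ℝ)⁻¹ * z i) = (∑ i, z i) / m := by
    rw [← Finset.mul_sum]; ring
  have hpow := pow_le_pow_left₀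
    (Finset.prod_nonneg fun i _ => Real.rpow_nonneg (hz i) _) hgm m
  rw [hL, hR, div_pow] at hpow
  rw [le_div_iff₀ (by positivity)] at hpow
  linarith [hpow]
lemma key_ineq {n : ℕ} (σ : ℝ) (s : Fin n → ℝ) (hσ : 0 < σ) (hs : ∀ i, 0 < s i) :
    ((n:ℝ)+1)^(2*n+1) * (σ^2 * ∏ i, s i ^ 2) ≤
      (σ^2 + ∑ i, s i ^ 2) * (σ + ∑ i, s i)^(2*n) := by
  set g : Fin (n+1) → ℝ := Fin.cons σ s with hg
  have hgpos : ∀ i, 0 ≤ g i := by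
    intro i; refine Fin.cases ?_ ?_ i <;> simp [hg, Fin.cons_succ, le_of_lt hσ,
      fun j => le_of_lt (hs j)]
  have hsum : ∑ i, g i = σ + ∑ i, s i := by simp [hg, Fin.sum_univ_succ]
  have hsumsq : ∑ i, g i ^ 2 = σ^2 + ∑ i, s i ^ 2 := by simp [hg, Fin.sum_univ_succ]
  have hprod : ∏ i, g i = σ * ∏ i, s i := by simp [hg, Fin.prod_univ_succ]
  -- Cauchy-Schwarz
  have hcs : (∑ i, g i)^2 ≤ ((n:ℝ)+1) * ∑ i, g i ^ 2 := by
    have := sq_sum_le_card_mul_sum_sq (s := Finset.univ) (f := g)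
    simpa [Finset.card_univ] using this
  -- AM-GM
  have hag : ((n:ℝ)+1)^(n+1) * ∏ i, g i ≤ (∑ i, g i)^(n+1) := by
    have := amgm_pow (m := n+1) (Nat.succ_pos n) g hgpos
    simpa using this
  have hsnn : 0 ≤ ∑ i, s i := Finset.sum_nonneg fun i _ => (hs i).le
  set T := σ + ∑ i, s i with hT
  have hTpos : 0 < T := by rw [hT]; linarith
  have hS2pos : 0 < σ^2 + ∑ i, s i ^ 2 := by
    have : (0:ℝ) ≤ ∑ i, s i ^ 2 := Finset.sum_nonneg fun i _ => sq_nonneg _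
    nlinarith
  have hPpos : 0 < σ * ∏ i, s i :=
    mul_pos hσ (Finset.prod_pos fun i _ => hs i)
  -- square AM-GM : ((n+1)^(n+1) * (σ ∏ s))^2 ≤ T^(2n+2)
  have hag2 : (((n:ℝ)+1)^(n+1) * (σ * ∏ i, s i))^2 ≤ T^(2*(n+1)) := by
    rw [pow_mul']
    refine pow_le_pow_left₀ (mul_nonneg (by positivity) hPpos.le) ?_ 2
    rw [← hprod]
    rw [show T = ∑ i, g i from hsum.symm]
    exact hag
  -- T^(2n+2) ≤ (n+1)(σ²+Σs²) T^(2n)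
  have hcs2 : T^(2*(n+1)) ≤ ((n:ℝ)+1) * (σ^2 + ∑ i, s i ^ 2) * T^(2*n) := by
    have : T^(2*(n+1)) = T^2 * T^(2*n) := by ring
    rw [this]
    have h2 : T^2 ≤ ((n:ℝ)+1) * (σ^2 + ∑ i, s i ^ 2) := by
      rw [← hsum, ← hsumsq]; exact hcs
    calc T^2 * T^(2*n) ≤ (((n:ℝ)+1) * (σ^2 + ∑ i, s i ^ 2)) * T^(2*n) := by
          gcongr
      _ = _ := by ring
  have hcomb := le_trans hag2 hcs2
  -- expand LHS of hcomb
  have hexp : (((n:ℝ)+1)^(n+1) * (σ * ∏ i, s i))^2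
      = ((n:ℝ)+1) * (((n:ℝ)+1)^(2*n+1) * (σ^2 * ∏ i, (s i)^2)) := by
    rw [mul_pow, mul_pow, ← Finset.prod_pow, ← pow_mul,
      show (n+1)*2 = (2*n+1)+1 by ring, pow_succ]
    ring
  rw [hexp] at hcomb
  have := (mul_le_mul_iff_right₀ (by positivity : (0:ℝ) < (n:ℝ)+1)).mp
    (by linarith : ((n:ℝ)+1) * (((n:ℝ)+1)^(2*n+1) * (σ^2 * ∏ i, (s i)^2))
      ≤ ((n:ℝ)+1) * ((σ^2 + ∑ i, s i ^ 2) * T^(2*n)))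
  exact this
lemma det_diag_add_const {n : ℕ} (s : Fin n → ℝ) (σ : ℝ) (hs : ∀ i, s i ≠ 0) (hσ : σ ≠ 0) :
    (Matrix.of fun j k : Fin n => (if j = k then 1/(s j)^2 else 0) + 1/σ^2).det
      = (σ^2 + ∑ i, (s i)^2) / (σ^2 * ∏ i, (s i)^2) := by
  set e : Fin n → ℝ := fun j => (s j)⁻¹ with he
  set w : Fin n → ℝ := fun j => s j / σ with hw
  have hM : (Matrix.of fun j k : Fin n => (if j = k then 1/(s j)^2 else 0) + 1/σ^2)
      = Matrix.diagonal e * (1 + Matrix.replicateCol Unit w * Matrix.replicateRow Unit w) * Matrix.diagonal e := by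
    ext j k
    rw [Matrix.mul_diagonal, Matrix.diagonal_mul]
    simp only [Matrix.of_apply, Matrix.add_apply, Matrix.one_apply, Matrix.mul_apply,
      Matrix.replicateCol_apply, Matrix.replicateRow_apply, Finset.univ_unique, Finset.sum_singleton,
      he, hw]
    by_cases hjk : j = k
    · subst hjk
      rw [if_pos rfl, if_pos rfl]
      field_simp [hs j]
    · rw [if_neg hjk, if_neg hjk]
      field_simp [hs j, hs k]
      ring
  rw [hM, Matrix.det_mul, Matrix.det_mul, Matrix.det_diagonal,
    Matrix.det_one_add_replicateCol_mul_replicateRow]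
  have hdot : dotProduct w w = (∑ i, (s i)^2) / σ^2 := by
    simp only [dotProduct, hw, div_mul_div_comm, ← sq]
    simp [div_pow, ← Finset.sum_div]
  rw [hdot]
  have hprod : ∏ i, e i = (∏ i, s i)⁻¹ := by
    simp [he]
  have hps : ∏ i, (s i)^2 = (∏ i, s i)^2 := by rw [Finset.prod_pow]
  rw [hprod, hps]
  have hP : ∏ i, s i ≠ 0 := Finset.prod_ne_zero_iff.mpr fun i _ => hs i
  rw [eq_div_iff (mul_ne_zero (pow_ne_zero 2 hσ) (pow_ne_zero 2 hP))]
  field_simp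

/-- The volumetric center of the simplex
`P₀ = {x : x_j ≥ -R ∀ j, ∑ x_j ≤ nR}` is `ω·𝟏` with `ω = ((n-1)/(n+1))·R`. -/
theorem volumetric_center_simplex (n : ℕ) (hn : 1 ≤ n) (R : ℝ) (hR : 0 < R)
    (A : Fin (n + 1) → Fin n → ℝ)
    (hA : ∀ i j, A i j =
      if (i : ℕ) < n then (if (i : ℕ) = (j : ℕ) then 1 else 0) else -1)
    (b : Fin (n + 1) → ℝ)
    (hb : ∀ i, b i = if (i : ℕ) < n then -R else -(n * R)) :
    let H : (Fin n → ℝ) → Matrix (Fin n) (Fin n) ℝ := fun x =>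
      Matrix.of fun j k => ∑ i, A i j * A i k / (∑ l, A i l * x l - b i) ^ 2
    let F : (Fin n → ℝ) → ℝ := fun x => (1 / 2) * Real.log (H x).det
    let P : Set (Fin n → ℝ) := {x | ∀ i, b i < ∑ j, A i j * x j}
    let xc : Fin n → ℝ := fun _ => ((n - 1) / (n + 1)) * R
    xc ∈ P ∧ ∀ x ∈ P, F xc ≤ F x := by
  intro H F P xc
  have hn' : (1:ℝ) ≤ (n:ℝ) := by exact_mod_cast hn
  set t : ℝ := 2*n*R/(n+1) with ht
  have htpos : 0 < t := by
    rw [ht]; apply div_pos (by nlinarith) (by linarith)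
  have hωR : ((n:ℝ)-1)/((n:ℝ)+1)*R + R = t := by
    rw [ht]; field_simp; ring
  have hxct : ∀ j : Fin n, xc j + R = t := fun j => hωR
  have hσc : (n:ℝ)*R - ∑ l, xc l = t := by
    have : ∑ l : Fin n, xc l = n * (((n:ℝ)-1)/((n:ℝ)+1)*R) := by
      simp [xc, Finset.sum_const, Finset.card_univ, nsmul_eq_mul]
    rw [this, ht]; field_simp; ring
  -- linear form
  have hlin : ∀ (y : Fin n → ℝ) (i : Fin (n+1)),
      (∑ l, A i l * y l) = if h : (i:ℕ) < n then y ⟨i, h⟩ else -∑ l, y l := by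
    intro y i
    by_cases h : (i:ℕ) < n
    · rw [dif_pos h, Finset.sum_eq_single (⟨(i:ℕ), h⟩ : Fin n)]
      · rw [hA]; simp [h]
      · intro l _ hl
        rw [hA, if_pos h, if_neg, zero_mul]
        intro hc
        exact hl (Fin.ext hc.symm)
      · intro hc; exact absurd (Finset.mem_univ _) hc
    · rw [dif_neg h]
      have : ∀ l : Fin n, A i l * y l = -(y l) := by
        intro l; rw [hA, if_neg h]; ring
      rw [Finset.sum_congr rfl fun l _ => this l, Finset.sum_neg_distrib]
  -- slack form
  have hslack : ∀ (y : Fin n → ℝ) (i : Fin (n+1)),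
      (∑ l, A i l * y l) - b i
        = if h : (i:ℕ) < n then y ⟨(i:ℕ), h⟩ + R else ((n:ℝ)*R - ∑ l, y l) := by
    intro y i
    rw [hlin, hb]
    by_cases h : (i:ℕ) < n
    · rw [dif_pos h, dif_pos h, if_pos h]; ring
    · rw [dif_neg h, dif_neg h, if_neg h]; ring
  -- membership criterion
  have hmem : ∀ y : Fin n → ℝ,
      y ∈ P ↔ ((∀ j : Fin n, 0 < y j + R) ∧ 0 < (n:ℝ)*R - ∑ l, y l) := by
    intro y
    constructor
    · intro hy
      constructor
      · intro j
        have h1 : 0 < (∑ l, A (Fin.castSucc j) l * y l) - b (Fin.castSucc j) :=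
          sub_pos.mpr (hy (Fin.castSucc j))
        rw [hslack] at h1
        have hj : ((Fin.castSucc j : Fin (n+1)) : ℕ) < n := by
          simpa using j.isLt
        rw [dif_pos hj] at h1
        exact h1
      · have h1 : 0 < (∑ l, A (Fin.last n) l * y l) - b (Fin.last n) :=
          sub_pos.mpr (hy (Fin.last n))
        rw [hslack, dif_neg (by simp)] at h1
        exact h1
    · intro ⟨h1, h2⟩ i
      rw [← sub_pos, hslack]
      by_cases h : (i:ℕ) < n
      · rw [dif_pos h]; exact h1 _
      · rw [dif_neg h]; exact h2
  -- explicit form of H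
  have hH : ∀ (y : Fin n → ℝ),
      H y = Matrix.of fun j k => (if j = k then 1/(y j + R)^2 else 0)
        + 1/((n:ℝ)*R - ∑ l, y l)^2 := by
    intro y
    ext j k
    simp only [H, Matrix.of_apply]
    rw [Fin.sum_univ_castSucc]
    have hlast : A (Fin.last n) j * A (Fin.last n) k
        / ((∑ l, A (Fin.last n) l * y l) - b (Fin.last n))^2
        = 1/((n:ℝ)*R - ∑ l, y l)^2 := by
      rw [hslack, dif_neg (by simp), hA, hA]
      simp
    have hcs : ∀ p : Fin n, A (Fin.castSucc p) j * A (Fin.castSucc p) k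
        / ((∑ l, A (Fin.castSucc p) l * y l) - b (Fin.castSucc p))^2
        = (if p = j then (1:ℝ) else 0) * (if p = k then (1:ℝ) else 0) / (y p + R)^2 := by
      intro p
      have hp : ((Fin.castSucc p : Fin (n+1)) : ℕ) < n := by simpa using p.isLt
      rw [hslack, dif_pos hp, hA, hA, if_pos hp, if_pos hp]
      have h2 : (⟨((Fin.castSucc p : Fin (n+1)) : ℕ), hp⟩ : Fin n) = p := by
        apply Fin.ext; rfl
      rw [h2]
      have e1 : ∀ q : Fin n,
          (if ((Fin.castSucc p : Fin (n+1)) : ℕ) = (q:ℕ) then (1:ℝ) else 0)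
            = if p = q then 1 else 0 := by
        intro q
        by_cases hq : p = q
        · subst hq; simp
        · rw [if_neg, if_neg hq]
          simp only [Fin.coe_castSucc]
          exact fun hc => hq (Fin.ext hc)
      rw [e1 j, e1 k]
    rw [Finset.sum_congr rfl (fun p _ => hcs p), hlast]
    congr 1
    have hsplit : ∀ p : Fin n,
        (if p = j then (1:ℝ) else 0) * (if p = k then (1:ℝ) else 0) / (y p + R)^2
        = if p = j then ((if p = k then (1:ℝ) else 0) / (y p + R)^2) else 0 := by
      intro p; by_cases h : p = j <;> simp [h]
    rw [Finset.sum_congr rfl (fun p _ => hsplit p), Finset.sum_ite_eq' Finset.univ j]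
    simp only [Finset.mem_univ, if_true]
    by_cases hjk : j = k
    · subst hjk; simp
    · simp [hjk, Ne.symm hjk]
  -- determinant formula on P
  have hdet : ∀ y : Fin n → ℝ, (∀ j : Fin n, 0 < y j + R) → 0 < (n:ℝ)*R - ∑ l, y l →
      (H y).det = (((n:ℝ)*R - ∑ l, y l)^2 + ∑ j, (y j + R)^2)
        / (((n:ℝ)*R - ∑ l, y l)^2 * ∏ j, (y j + R)^2) := by
    intro y h1 h2
    rw [hH y]
    exact det_diag_add_const (fun j => y j + R) _ (fun j => (h1 j).ne') h2.ne'
  -- xc in P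
  have hxcP : xc ∈ P := by
    rw [hmem]
    exact ⟨fun j => by rw [hxct j]; exact htpos, by rw [hσc]; exact htpos⟩
  -- determinant at xc
  have hdetc : (H xc).det = ((n:ℝ)+1) / (t^2)^n := by
    rw [hdet xc (fun j => by rw [hxct j]; exact htpos) (by rw [hσc]; exact htpos)]
    rw [hσc]
    have hs2 : ∑ j : Fin n, (xc j + R)^2 = n * t^2 := by
      rw [Finset.sum_congr rfl (fun j _ => by rw [hxct j] :
        ∀ j ∈ Finset.univ, (xc j + R)^2 = t^2)]
      simp [Finset.card_univ, nsmul_eq_mul]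
    have hp2 : ∏ j : Fin n, (xc j + R)^2 = (t^2)^n := by
      rw [Finset.prod_congr rfl (fun j _ => by rw [hxct j] :
        ∀ j ∈ Finset.univ, (xc j + R)^2 = t^2)]
      simp [Finset.card_univ]
    rw [hs2, hp2]
    have ht2 : (t:ℝ)^2 ≠ 0 := pow_ne_zero 2 htpos.ne'
    field_simp
    ring
  refine ⟨hxcP, ?_⟩
  intro x hx
  rw [hmem] at hx
  obtain ⟨hxs, hxσ⟩ := hx
  set σ : ℝ := (n:ℝ)*R - ∑ l, x l with hσdef
  set s : Fin n → ℝ := fun j => x j + R with hsdef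
  have hsum_slack : σ + ∑ j, s j = ((n:ℝ)+1)*t := by
    have h1 : ∑ j, s j = (∑ j, x j) + n*R := by
      simp [hsdef, Finset.sum_add_distrib, Finset.card_univ, nsmul_eq_mul]
    rw [hσdef, h1, ht]
    field_simp
    ring
  have hdetx : (H x).det = (σ^2 + ∑ j, (s j)^2) / (σ^2 * ∏ j, (s j)^2) :=
    hdet x hxs hxσ
  have hS2pos : 0 < σ^2 + ∑ j, (s j)^2 := by
    have : (0:ℝ) ≤ ∑ j, (s j)^2 := Finset.sum_nonneg fun j _ => sq_nonneg _
    nlinarith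
  have hPrpos : 0 < ∏ j, (s j)^2 := Finset.prod_pos fun j _ => pow_pos (hxs j) 2
  -- key comparison
  have hdet_le : (H xc).det ≤ (H x).det := by
    rw [hdetc, hdetx]
    rw [div_le_div_iff₀ (by positivity) (by positivity)]
    have hkey := key_ineq σ s hxσ hxs
    rw [hsum_slack] at hkey
    have hrw : (((n:ℝ)+1)*t)^(2*n) = ((n:ℝ)+1)^(2*n) * (t^2)^n := by
      rw [mul_pow, ← pow_mul]
    rw [hrw] at hkey
    have hcancel : ((n:ℝ)+1)^(2*n) * (((n:ℝ)+1) * (σ^2 * ∏ j, (s j)^2))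
        ≤ ((n:ℝ)+1)^(2*n) * ((σ^2 + ∑ j, (s j)^2) * (t^2)^n) := by
      calc ((n:ℝ)+1)^(2*n) * (((n:ℝ)+1) * (σ^2 * ∏ j, (s j)^2))
          = ((n:ℝ)+1)^(2*n+1) * (σ^2 * ∏ j, (s j)^2) := by ring
        _ ≤ (σ^2 + ∑ j, (s j)^2) * (((n:ℝ)+1)^(2*n) * (t^2)^n) := hkey
        _ = ((n:ℝ)+1)^(2*n) * ((σ^2 + ∑ j, (s j)^2) * (t^2)^n) := by ring
    have := (mul_le_mul_iff_right₀ (by positivity : (0:ℝ) < ((n:ℝ)+1)^(2*n))).mp hcancel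
    linarith
  -- conclude via log
  have hposc : 0 < (H xc).det := by rw [hdetc]; positivity
  have hlog := Real.log_le_log hposc hdet_le
  simp only [F]
  linarith
end

section
/- Let f(x,y) be jointly convex and differentiable, X ⊆ ℝ^{n_x} convex, and define g(x) = min_{y∈ℝ^{n_y}} f(x,y) with minimizer y(x') for each x' ∈ X. If ỹ satisfies ⟨∇_y f(x, ỹ), ỹ - y(x')⟩ ≤ δ for all x' ∈ X, then ∇_x f(x, ỹ) is a δ-subgradient of g at x, i.e., g(x') ≥ g(x) + ⟨∇_x f(x, ỹ), x' - x⟩ - δ for all x' ∈ X. -/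
open RealInnerProductSpace

/-- If `⟨∇_y f(x,ỹ), ỹ - y(x')⟩ ≤ δ` for all `x' ∈ X`, then `∇_x f(x,ỹ)` is a
δ-subgradient of `g(x) = min_y f(x,y)` at `x`. -/
theorem delta_subgradient_min_min {nx ny : ℕ}
    (f : EuclideanSpace ℝ (Fin nx) → EuclideanSpace ℝ (Fin ny) → ℝ)
    (gx : EuclideanSpace ℝ (Fin nx) → EuclideanSpace ℝ (Fin ny) → EuclideanSpace ℝ (Fin nx))
    (gy : EuclideanSpace ℝ (Fin nx) → EuclideanSpace ℝ (Fin ny) → EuclideanSpace ℝ (Fin ny))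
    (X : Set (EuclideanSpace ℝ (Fin nx))) (hX : Convex ℝ X)
    (hjoint : ∀ x x' y y',
      f x' y' ≥ f x y + ⟪gx x y, x' - x⟫ + ⟪gy x y, y' - y⟫)
    (g : EuclideanSpace ℝ (Fin nx) → ℝ)
    (ysol : EuclideanSpace ℝ (Fin nx) → EuclideanSpace ℝ (Fin ny))
    (hg : ∀ x', g x' = f x' (ysol x'))
    (hmin : ∀ x' y, f x' (ysol x') ≤ f x' y)
    (x : EuclideanSpace ℝ (Fin nx)) (hx : x ∈ X)
    (ytil : EuclideanSpace ℝ (Fin ny)) (δ : ℝ)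
    (hδ : ∀ x' ∈ X, ⟪gy x ytil, ytil - ysol x'⟫ ≤ δ) :
    ∀ x' ∈ X, g x' ≥ g x + ⟪gx x ytil, x' - x⟫ - δ := by
  intro x' hx'
  have h1 := hjoint x x' ytil (ysol x')
  have h2 : g x ≤ f x ytil := (hg x).le.trans (le_trans (le_refl _) (hmin x ytil))
  have h3 : ⟪gy x ytil, ysol x' - ytil⟫ ≥ -δ := by
    have h := neg_le_neg (hδ x' hx')
    rwa [← inner_neg_right, neg_sub] at h
  rw [hg x']
  linarith
end

section
/- Let f(x,y) be jointly convex, μ_y-strongly convex in y, and L_{yy}-smooth in y for each fixed x ∈ X, where X is compact. Define g(x) = min_y f(x,y) with minimizer y(x), and D = max_{x∈X}(f(x,0) - g(x)). If ỹ satisfies f(x', ỹ) - g(x') ≤ δ̃, then ∇_x f(x', ỹ) is a δ-subgradient of g at x' with δ = 2(√δ̃ + 2√D)·√(L_{yy}δ̃/μ_y). -/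
open RealInnerProductSpace

private lemma gauss_sum (n : ℕ) : ∑ i ∈ Finset.range n, ((i:ℝ)+1) = n*(n+1)/2 := by
  induction n with
  | zero => simp
  | succ k ih => rw [Finset.sum_range_succ, ih]; push_cast; ring

private lemma smooth_upper {ny : ℕ} (φ : EuclideanSpace ℝ (Fin ny) → ℝ)
    (G : EuclideanSpace ℝ (Fin ny) → EuclideanSpace ℝ (Fin ny)) (L : ℝ) (hL : 0 < L)
    (hconv : ∀ y y', φ y' ≥ φ y + ⟪G y, y' - y⟫)
    (hlip : ∀ y y', ‖G y - G y'‖ ≤ L * ‖y - y'‖) (y y' : EuclideanSpace ℝ (Fin ny)) :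
    φ y' ≤ φ y + ⟪G y, y' - y⟫ + L / 2 * ‖y' - y‖ ^ 2 := by
  set u := y' - y with hu
  have key : ∀ n : ℕ, 0 < n →
      φ y' - φ y ≤ ⟪G y, u⟫ + L*‖u‖^2/2 + L*‖u‖^2/(2*n) := by
    intro n hn
    have hn' : (0:ℝ) < n := Nat.cast_pos.mpr hn
    set p : ℕ → EuclideanSpace ℝ (Fin ny) := fun i => y + ((i:ℝ)/n) • u with hp
    have hdiff : ∀ i : ℕ, p (i+1) - p i = ((1:ℝ)/n) • u := by
      intro i
      have h1 : ((i+1:ℕ):ℝ)/n = (i:ℝ)/n + 1/n := by push_cast; ring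
      simp only [hp, h1, add_smul]
      abel
    have hdist : ∀ i : ℕ, ‖p i - y‖ = (i:ℝ)/n * ‖u‖ := by
      intro i
      have h2 : p i - y = ((i:ℝ)/n) • u := by simp only [hp]; abel
      rw [h2, norm_smul, Real.norm_eq_abs, abs_of_nonneg (by positivity)]
    have term : ∀ i ∈ Finset.range n,
        φ (p (i+1)) - φ (p i) ≤ ⟪G y, u⟫/n + (L*‖u‖^2/n^2)*((i:ℝ)+1) := by
      intro i _
      have hc := hconv (p (i+1)) (p i)
      have h2 : ⟪G (p (i+1)), p i - p (i+1)⟫ = - ((1/n) * ⟪G (p (i+1)), u⟫) := by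
        rw [← neg_sub (p (i+1)) (p i), inner_neg_right, hdiff, real_inner_smul_right]
      have h4 : ⟪G (p (i+1)), u⟫ ≤ ⟪G y, u⟫ + (L*‖u‖^2)*(((i:ℝ)+1)/n) := by
        have h5 : ⟪G (p (i+1)), u⟫ = ⟪G y, u⟫ + ⟪G (p (i+1)) - G y, u⟫ := by
          rw [inner_sub_left]; ring
        have h6 : ⟪G (p (i+1)) - G y, u⟫ ≤ ‖G (p (i+1)) - G y‖ * ‖u‖ := real_inner_le_norm _ _
        have h7 : ‖G (p (i+1)) - G y‖ ≤ L * (((i:ℝ)+1)/n * ‖u‖) := by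
          have h8 := hlip (p (i+1)) y
          rw [hdist (i+1)] at h8
          push_cast at h8
          exact h8
        have h9 : ‖G (p (i+1)) - G y‖ * ‖u‖ ≤ (L * (((i:ℝ)+1)/n * ‖u‖)) * ‖u‖ :=
          mul_le_mul_of_nonneg_right h7 (norm_nonneg _)
        rw [h5]
        have : (L * (((i:ℝ)+1)/n * ‖u‖)) * ‖u‖ = (L*‖u‖^2)*(((i:ℝ)+1)/n) := by ring
        linarith [h6, h9, this ▸ h9]
      have h10 : (0:ℝ) < 1/n := by positivity
      have h11 : (1/n) * ⟪G (p (i+1)), u⟫ ≤ (1/n) * (⟪G y, u⟫ + (L*‖u‖^2)*(((i:ℝ)+1)/n)) :=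
        mul_le_mul_of_nonneg_left h4 (le_of_lt h10)
      have h12 : (1/n) * (⟪G y, u⟫ + (L*‖u‖^2)*(((i:ℝ)+1)/n))
          = ⟪G y, u⟫/n + (L*‖u‖^2/n^2)*((i:ℝ)+1) := by field_simp
      rw [h2] at hc
      linarith
    have sum := Finset.sum_le_sum term
    rw [Finset.sum_range_sub (fun i => φ (p i)) n] at sum
    have hp0 : p 0 = y := by simp [hp]
    have hpn : p n = y' := by
      simp only [hp, div_self (ne_of_gt hn'), one_smul, hu]
      abel
    rw [hp0, hpn] at sum
    have hrhs : ∑ i ∈ Finset.range n, (⟪G y, u⟫/n + (L*‖u‖^2/n^2)*((i:ℝ)+1))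
        = ⟪G y, u⟫ + L*‖u‖^2/2 + L*‖u‖^2/(2*n) := by
      rw [Finset.sum_add_distrib, Finset.sum_const, Finset.card_range, ← Finset.mul_sum,
        gauss_sum, nsmul_eq_mul]
      field_simp
      ring
    rw [hrhs] at sum
    exact sum
  have hfinal : φ y' - φ y ≤ ⟪G y, u⟫ + L*‖u‖^2/2 := by
    apply le_of_forall_pos_le_add
    intro ε hε
    obtain ⟨n, hn⟩ := exists_nat_gt (L*‖u‖^2/(2*ε))
    have hn0 : 0 < n := by
      rcases Nat.eq_zero_or_pos n with h | h
      · exfalso; rw [h] at hn; simp at hn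
        have : (0:ℝ) ≤ L*‖u‖^2/(2*ε) := by positivity
        linarith
      · exact h
    have hn' : (0:ℝ) < n := Nat.cast_pos.mpr hn0
    have h1 := key n hn0
    have h2 : L*‖u‖^2/(2*n) ≤ ε := by
      rw [div_le_iff₀ (by positivity)]
      rw [div_lt_iff₀ (by positivity)] at hn
      nlinarith
    linarith
  linarith
/-- If `f(x',ỹ) - g(x') ≤ δ̃`, then `∇_x f(x',ỹ)` is a δ-subgradient of
`g(x) = min_y f(x,y)` at `x'`, with `δ = 2(√δ̃ + 2√D)·√(L_yy δ̃ / μ_y)`. -/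
theorem delta_subgradient_min_min_quant {nx ny : ℕ}
    (f : EuclideanSpace ℝ (Fin nx) → EuclideanSpace ℝ (Fin ny) → ℝ)
    (gx : EuclideanSpace ℝ (Fin nx) → EuclideanSpace ℝ (Fin ny) → EuclideanSpace ℝ (Fin nx))
    (gy : EuclideanSpace ℝ (Fin nx) → EuclideanSpace ℝ (Fin ny) → EuclideanSpace ℝ (Fin ny))
    (X : Set (EuclideanSpace ℝ (Fin nx))) (hXconv : Convex ℝ X) (hXcomp : IsCompact X)
    (μy Lyy D δt : ℝ) (hμ : 0 < μy) (hL : 0 < Lyy) (hδt : 0 < δt) (hD : 0 ≤ D)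
    (hjoint : ∀ x x' y y',
      f x' y' ≥ f x y + ⟪gx x y, x' - x⟫ + ⟪gy x y, y' - y⟫)
    (hstrong : ∀ x ∈ X, ∀ y y' : EuclideanSpace ℝ (Fin ny),
      f x y' ≥ f x y + ⟪gy x y, y' - y⟫ + μy / 2 * ‖y' - y‖ ^ 2)
    (hsmooth : ∀ x ∈ X, ∀ y y' : EuclideanSpace ℝ (Fin ny),
      ‖gy x y - gy x y'‖ ≤ Lyy * ‖y - y'‖)
    (g : EuclideanSpace ℝ (Fin nx) → ℝ)
    (ysol : EuclideanSpace ℝ (Fin nx) → EuclideanSpace ℝ (Fin ny))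
    (hg : ∀ x', g x' = f x' (ysol x'))
    (hmin : ∀ x' y, f x' (ysol x') ≤ f x' y)
    (hDbound : ∀ x ∈ X, f x 0 - g x ≤ D)
    (x' : EuclideanSpace ℝ (Fin nx)) (hx' : x' ∈ X)
    (ytil : EuclideanSpace ℝ (Fin ny))
    (happrox : f x' ytil - g x' ≤ δt) :
    ∀ x ∈ X, g x ≥ g x' + ⟪gx x' ytil, x - x'⟫ -
      2 * (Real.sqrt δt + 2 * Real.sqrt D) * Real.sqrt (Lyy * δt / μy) := by
  -- convexity in y for fixed base point
  have hconvy : ∀ x₀ y y', f x₀ y' ≥ f x₀ y + ⟪gy x₀ y, y' - y⟫ := by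
    intro x₀ y y'
    have h := hjoint x₀ x₀ y y'
    simp only [sub_self, inner_zero_right, add_zero] at h
    exact h
  -- gradient norm bound at approximate minimizers
  have hgradsq : ∀ x₀ ∈ X, ∀ y, ‖gy x₀ y‖^2 ≤ 2*Lyy*(f x₀ y - f x₀ (ysol x₀)) := by
    intro x₀ hx₀ y
    set c := gy x₀ y with hc
    have su := smooth_upper (f x₀) (gy x₀) Lyy hL (hconvy x₀) (hsmooth x₀ hx₀)
      y (y - (1/Lyy) • c)
    have h1 : (y - (1/Lyy) • c) - y = -((1/Lyy) • c) := sub_sub_cancel_left y ((1/Lyy) • c)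
    rw [h1] at su
    rw [inner_neg_right, real_inner_smul_right, real_inner_self_eq_norm_sq] at su
    rw [norm_neg, norm_smul, Real.norm_eq_abs, abs_of_pos (by positivity), mul_pow] at su
    have hmin' := hmin x₀ (y - (1/Lyy) • c)
    have harith : f x₀ y + -(1/Lyy * ‖c‖^2) + Lyy/2 * ((1/Lyy)^2 * ‖c‖^2)
        = f x₀ y - ‖c‖^2/(2*Lyy) := by field_simp; ring
    rw [harith] at su
    have h3 : ‖c‖^2/(2*Lyy) ≤ f x₀ y - f x₀ (ysol x₀) := by
      have := le_trans hmin' su; linarith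
    rw [div_le_iff₀ (by positivity)] at h3
    linarith
  have hgradzero : ∀ x₀ ∈ X, gy x₀ (ysol x₀) = 0 := by
    intro x₀ hx₀
    have h := hgradsq x₀ hx₀ (ysol x₀)
    simp only [sub_self, mul_zero] at h
    have h2 : ‖gy x₀ (ysol x₀)‖ = 0 := by nlinarith [norm_nonneg (gy x₀ (ysol x₀)), sq_nonneg ‖gy x₀ (ysol x₀)‖]
    exact norm_eq_zero.mp h2
  have hstrong0 : ∀ x₀ ∈ X, ∀ y', f x₀ y' ≥ f x₀ (ysol x₀) + μy/2 * ‖y' - ysol x₀‖^2 := by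
    intro x₀ hx₀ y'
    have h := hstrong x₀ hx₀ (ysol x₀) y'
    rw [hgradzero x₀ hx₀, inner_zero_left] at h
    linarith
  -- norm bounds
  have hyt : ‖ytil - ysol x'‖ ≤ Real.sqrt (2*δt/μy) := by
    have h := hstrong0 x' hx' ytil
    rw [hg] at happrox
    have h2 : ‖ytil - ysol x'‖^2 ≤ 2*δt/μy := by
      rw [le_div_iff₀ hμ]; nlinarith
    calc ‖ytil - ysol x'‖ = Real.sqrt (‖ytil - ysol x'‖^2) := (Real.sqrt_sq (norm_nonneg _)).symm
      _ ≤ Real.sqrt (2*δt/μy) := Real.sqrt_le_sqrt h2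
  have hys : ∀ x₀ ∈ X, ‖ysol x₀‖ ≤ Real.sqrt (2*D/μy) := by
    intro x₀ hx₀
    have h := hstrong0 x₀ hx₀ 0
    have hd := hDbound x₀ hx₀
    rw [hg] at hd
    rw [zero_sub, norm_neg] at h
    have h2 : ‖ysol x₀‖^2 ≤ 2*D/μy := by
      rw [le_div_iff₀ hμ]; nlinarith
    calc ‖ysol x₀‖ = Real.sqrt (‖ysol x₀‖^2) := (Real.sqrt_sq (norm_nonneg _)).symm
      _ ≤ Real.sqrt (2*D/μy) := Real.sqrt_le_sqrt h2
  have hgnorm : ‖gy x' ytil‖ ≤ Real.sqrt (2*Lyy*δt) := by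
    have h := hgradsq x' hx' ytil
    rw [hg] at happrox
    have h2 : ‖gy x' ytil‖^2 ≤ 2*Lyy*δt := by nlinarith
    calc ‖gy x' ytil‖ = Real.sqrt (‖gy x' ytil‖^2) := (Real.sqrt_sq (norm_nonneg _)).symm
      _ ≤ Real.sqrt (2*Lyy*δt) := Real.sqrt_le_sqrt h2
  -- sqrt identity
  have h4 : Real.sqrt 4 = 2 := by
    rw [show (4:ℝ) = 2^2 by norm_num, Real.sqrt_sq (by norm_num)]
  have e1 : Real.sqrt (2*Lyy*δt) * Real.sqrt (2*δt/μy)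
      = 2 * (Real.sqrt δt * Real.sqrt (Lyy*δt/μy)) := by
    rw [← Real.sqrt_mul (by positivity), ← Real.sqrt_mul hδt.le, ← h4,
      ← Real.sqrt_mul (by norm_num)]
    congr 1
    field_simp
    rw [h4]
    ring
  have e2 : Real.sqrt (2*Lyy*δt) * Real.sqrt (2*D/μy)
      = 2 * (Real.sqrt D * Real.sqrt (Lyy*δt/μy)) := by
    rw [← Real.sqrt_mul (by positivity), ← Real.sqrt_mul hD, ← h4,
      ← Real.sqrt_mul (by norm_num)]
    congr 1
    field_simp
    rw [h4]
    ring
  -- main argument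
  intro x hx
  have h1 := hjoint x' x ytil (ysol x)
  have h2 : g x' ≤ f x' ytil := by rw [hg]; exact hmin x' ytil
  have hvnorm : ‖ysol x - ytil‖ ≤ Real.sqrt (2*δt/μy) + 2*Real.sqrt (2*D/μy) := by
    have ha : ‖ysol x - ytil‖ ≤ ‖ysol x‖ + ‖ytil‖ := norm_sub_le _ _
    have hb : ‖ytil‖ ≤ ‖ytil - ysol x'‖ + ‖ysol x'‖ := by
      calc ‖ytil‖ = ‖(ytil - ysol x') + ysol x'‖ := by rw [sub_add_cancel]
        _ ≤ ‖ytil - ysol x'‖ + ‖ysol x'‖ := norm_add_le _ _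
    have := hys x hx
    have := hys x' hx'
    linarith
  have hinner : ⟪gy x' ytil, ysol x - ytil⟫
      ≥ -(Real.sqrt (2*Lyy*δt) * (Real.sqrt (2*δt/μy) + 2*Real.sqrt (2*D/μy))) := by
    have ha := abs_real_inner_le_norm (gy x' ytil) (ysol x - ytil)
    have hb : ‖gy x' ytil‖ * ‖ysol x - ytil‖
        ≤ Real.sqrt (2*Lyy*δt) * (Real.sqrt (2*δt/μy) + 2*Real.sqrt (2*D/μy)) :=
      mul_le_mul hgnorm hvnorm (norm_nonneg _) (Real.sqrt_nonneg _)
    have hc := neg_abs_le (⟪gy x' ytil, ysol x - ytil⟫ : ℝ)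
    linarith
  have hkey : Real.sqrt (2*Lyy*δt) * (Real.sqrt (2*δt/μy) + 2*Real.sqrt (2*D/μy))
      = 2 * (Real.sqrt δt + 2 * Real.sqrt D) * Real.sqrt (Lyy * δt / μy) := by
    linear_combination e1 + 2*e2
  rw [hg x]
  linarith [h1, h2, hinner, hkey.ge, hkey.le]
end

section
/- Let f(x,y) be μ_y-strongly concave in y, with ‖∇_x f(x,y)-∇_x f(x',y)‖₂ ≤ L_{xx}‖x-x'‖₂ and ‖∇_x f(x,y)-∇_x f(x,y')‖₂ ≤ L_{xy}‖y-y'‖₂. Then g(x) = max_y f(x,y) is differentiable with ∇g(x) = ∇_x f(x, y*(x)), and g is L_g-smooth with L_g = L_{xx} + 2L_{xy}²/μ_y: ‖∇g(x) - ∇g(x')‖₂ ≤ L_g‖x - x'‖₂. -/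
open RealInnerProductSpace

set_option maxHeartbeats 1000000 in
/-- Danskin-type smoothness: `g(x) = max_y f(x,y)` is differentiable with
`∇g(x) = ∇_x f(x, y*(x))` and is `L_g`-smooth with `L_g = L_xx + 2L_xy²/μ_y`. -/
theorem g_smooth {nx ny : ℕ}
    (f : EuclideanSpace ℝ (Fin nx) → EuclideanSpace ℝ (Fin ny) → ℝ)
    (gx : EuclideanSpace ℝ (Fin nx) → EuclideanSpace ℝ (Fin ny) → EuclideanSpace ℝ (Fin nx))
    (gy : EuclideanSpace ℝ (Fin nx) → EuclideanSpace ℝ (Fin ny) → EuclideanSpace ℝ (Fin ny))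
    (μy Lxx Lxy : ℝ) (hμ : 0 < μy) (hLxx : 0 ≤ Lxx) (hLxy : 0 ≤ Lxy)
    (hgradx : ∀ x y, HasGradientAt (fun x' => f x' y) (gx x y) x)
    (hgrady : ∀ x y, HasGradientAt (fun y' => f x y') (gy x y) y)
    (hconc : ∀ x, ∀ y y' : EuclideanSpace ℝ (Fin ny),
      f x y' ≤ f x y + ⟪gy x y, y' - y⟫ - μy / 2 * ‖y' - y‖ ^ 2)
    (hsmoothxx : ∀ x x' : EuclideanSpace ℝ (Fin nx), ∀ y,
      ‖gx x y - gx x' y‖ ≤ Lxx * ‖x - x'‖)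
    (hsmoothxy : ∀ x, ∀ y y' : EuclideanSpace ℝ (Fin ny),
      ‖gx x y - gx x y'‖ ≤ Lxy * ‖y - y'‖)
    (hcrossx : ∀ x x' : EuclideanSpace ℝ (Fin nx), ∀ y,
      ‖gy x y - gy x' y‖ ≤ Lxy * ‖x - x'‖)
    (ystar : EuclideanSpace ℝ (Fin nx) → EuclideanSpace ℝ (Fin ny))
    (hmax : ∀ x y, f x y ≤ f x (ystar x))
    (g : EuclideanSpace ℝ (Fin nx) → ℝ)
    (hg : ∀ x, g x = f x (ystar x)) :
    (∀ x, HasGradientAt g (gx x (ystar x)) x) ∧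
      ∀ x x', ‖gx x (ystar x) - gx x' (ystar x')‖ ≤
        (Lxx + 2 * Lxy ^ 2 / μy) * ‖x - x'‖ := by
  -- The gradient in `y` vanishes at the maximizer.
  have hzero : ∀ x, gy x (ystar x) = 0 := by
    intro x
    have hloc : IsLocalMax (fun y' => f x y') (ystar x) :=
      Filter.Eventually.of_forall (hmax x)
    have h0 := hloc.hasFDerivAt_eq_zero (hgrady x (ystar x)).hasFDerivAt
    have := congrArg (fun L => (InnerProductSpace.toDual ℝ _).symm L) h0
    simpa using this
  -- `ystar` is `(Lxy/μy)`-Lipschitz.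
  have hlip : ∀ x x', μy * ‖ystar x - ystar x'‖ ≤ Lxy * ‖x - x'‖ := by
    intro x x'
    set Δ : EuclideanSpace ℝ (Fin ny) := ystar x - ystar x' with hΔ
    have h1 := hconc x (ystar x) (ystar x')
    have h2 := hconc x (ystar x') (ystar x)
    rw [hzero x] at h1
    simp only [inner_zero_left] at h1
    have hnorm : ‖ystar x' - ystar x‖ = ‖Δ‖ := by
      rw [hΔ, ← neg_sub, norm_neg]
    rw [hnorm] at h1
    have hsum : μy * ‖Δ‖ ^ 2 ≤ ⟪gy x (ystar x'), Δ⟫ := by nlinarith [h1, h2]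
    have hcs : ⟪gy x (ystar x'), Δ⟫ ≤ ‖gy x (ystar x')‖ * ‖Δ‖ :=
      real_inner_le_norm _ _
    have hbd : ‖gy x (ystar x')‖ ≤ Lxy * ‖x - x'‖ := by
      have := hcrossx x x' (ystar x')
      rwa [hzero x', sub_zero] at this
    rcases eq_or_lt_of_le (norm_nonneg Δ) with h | h
    · rw [← h, mul_zero]
      positivity
    · have : μy * ‖Δ‖ ^ 2 ≤ (Lxy * ‖x - x'‖) * ‖Δ‖ := by
        calc μy * ‖Δ‖ ^ 2 ≤ ⟪gy x (ystar x'), Δ⟫ := hsum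
        _ ≤ ‖gy x (ystar x')‖ * ‖Δ‖ := hcs
        _ ≤ (Lxy * ‖x - x'‖) * ‖Δ‖ := by
            exact mul_le_mul_of_nonneg_right hbd (norm_nonneg _)
      nlinarith
  constructor
  · -- differentiability of `g`
    intro x
    set u := gx x (ystar x) with hu
    set y0 := ystar x with hy0
    have hr : (fun x' => f x' y0 - f x y0 - ⟪u, x' - x⟫) =o[nhds x]
        fun x' => x' - x := by
      have := ((hgradx x y0).hasFDerivAt).isLittleO
      simpa [InnerProductSpace.toDual_apply_apply] using this
    set K := Lxy * (Lxy / μy) with hK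
    have hK0 : 0 ≤ K := by positivity
    -- sandwich bound
    have hsand : ∀ x', |g x' - g x - ⟪u, x' - x⟫| ≤
        |f x' y0 - f x y0 - ⟪u, x' - x⟫| + K * ‖x' - x‖ ^ 2 := by
      intro x'
      have hlow : f x' y0 - f x y0 ≤ g x' - g x := by
        rw [hg x', hg x, ← hy0]
        have := hmax x' y0
        linarith
      have hup : g x' - g x ≤ f x' y0 - f x y0 + K * ‖x' - x‖ ^ 2 := by
        rw [hg x', hg x, ← hy0]
        have hc := hconc x' y0 (ystar x')
        have hgb : ‖gy x' y0‖ ≤ Lxy * ‖x' - x‖ := by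
          have := hcrossx x' x y0
          rwa [hy0, hzero x, sub_zero] at this
        have hcs : ⟪gy x' y0, ystar x' - y0⟫ ≤ ‖gy x' y0‖ * ‖ystar x' - y0‖ :=
          real_inner_le_norm _ _
        have hlipx : μy * ‖ystar x' - y0‖ ≤ Lxy * ‖x' - x‖ := by
          simpa [hy0] using hlip x' x
        have hquad : 0 ≤ μy / 2 * ‖ystar x' - y0‖ ^ 2 := by positivity
        have hprod : ‖gy x' y0‖ * ‖ystar x' - y0‖ ≤ K * ‖x' - x‖ ^ 2 := by
          have h1 : ‖ystar x' - y0‖ ≤ (Lxy / μy) * ‖x' - x‖ := by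
            rw [div_mul_eq_mul_div, le_div_iff₀ hμ]
            nlinarith
          have := mul_le_mul hgb h1 (norm_nonneg _)
            (by positivity : (0:ℝ) ≤ Lxy * ‖x' - x‖)
          calc ‖gy x' y0‖ * ‖ystar x' - y0‖
              ≤ (Lxy * ‖x' - x‖) * ((Lxy / μy) * ‖x' - x‖) := this
            _ = K * ‖x' - x‖ ^ 2 := by rw [hK]; ring
        nlinarith [hc, hcs, hprod, hquad]
      rw [abs_le]
      constructor
      · have := abs_nonneg (f x' y0 - f x y0 - ⟪u, x' - x⟫)
        have h2 := neg_abs_le (f x' y0 - f x y0 - ⟪u, x' - x⟫)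
        nlinarith [sq_nonneg ‖x' - x‖]
      · have h2 := le_abs_self (f x' y0 - f x y0 - ⟪u, x' - x⟫)
        linarith
    have hgoal : (fun x' => g x' - g x - ⟪u, x' - x⟫) =o[nhds x]
        fun x' => x' - x := by
      rw [Asymptotics.isLittleO_iff]
      intro c hc
      have h1 := (Asymptotics.isLittleO_iff.mp hr) (show (0:ℝ) < c / 2 by linarith)
      have h2 : ∀ᶠ x' in nhds x, ‖x' - x‖ < c / (2 * (K + 1)) := by
        have hε : (0:ℝ) < c / (2 * (K + 1)) := by positivity
        simpa using eventually_norm_sub_lt x hε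
      filter_upwards [h1, h2] with x' hx1 hx2
      have hb := hsand x'
      have hxx : (0:ℝ) ≤ ‖x' - x‖ := norm_nonneg _
      have hxk : K * ‖x' - x‖ ≤ K * (c / (2 * (K + 1))) :=
        mul_le_mul_of_nonneg_left hx2.le hK0
      have hfrac : K * (c / (2 * (K + 1))) ≤ c / 2 := by
        have he : K * (c / (2 * (K + 1))) = K * c / (2 * (K + 1)) := by ring
        rw [he, div_le_div_iff₀ (by positivity) (by norm_num : (0:ℝ) < 2)]
        nlinarith
      have hsq : K * ‖x' - x‖ ^ 2 ≤ c / 2 * ‖x' - x‖ := by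
        have h5 : K * ‖x' - x‖ ≤ c / 2 := le_trans hxk hfrac
        nlinarith
      have hR : ‖f x' y0 - f x y0 - ⟪u, x' - x⟫‖ ≤ c / 2 * ‖x' - x‖ := hx1
      rw [Real.norm_eq_abs] at hR ⊢
      calc |g x' - g x - ⟪u, x' - x⟫|
          ≤ |f x' y0 - f x y0 - ⟪u, x' - x⟫| + K * ‖x' - x‖ ^ 2 := hb
        _ ≤ c / 2 * ‖x' - x‖ + c / 2 * ‖x' - x‖ := by linarith
        _ = c * ‖x' - x‖ := by ring
    rw [hasGradientAt_iff_hasFDerivAt]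
    refine HasFDerivAt.of_isLittleO ?_
    have heq : ∀ x', g x' - g x - (InnerProductSpace.toDual ℝ
        (EuclideanSpace ℝ (Fin nx))) u (x' - x) = g x' - g x - ⟪u, x' - x⟫ := by
      intro x'
      rw [InnerProductSpace.toDual_apply_apply]
    exact hgoal.congr' (Filter.Eventually.of_forall fun x' => (heq x').symm) (by rfl)
  · -- Lipschitz bound on the gradient
    intro x x'
    have htri : ‖gx x (ystar x) - gx x' (ystar x')‖ ≤
        ‖gx x (ystar x) - gx x' (ystar x)‖ + ‖gx x' (ystar x) - gx x' (ystar x')‖ := by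
      have := norm_sub_le_norm_sub_add_norm_sub (gx x (ystar x)) (gx x' (ystar x))
        (gx x' (ystar x'))
      linarith
    have h1 := hsmoothxx x x' (ystar x)
    have h2 := hsmoothxy x' (ystar x) (ystar x')
    have h3 : Lxy * ‖ystar x - ystar x'‖ ≤ Lxy * ((Lxy / μy) * ‖x - x'‖) := by
      have hl := hlip x x'
      have : ‖ystar x - ystar x'‖ ≤ (Lxy / μy) * ‖x - x'‖ := by
        rw [div_mul_eq_mul_div, le_div_iff₀ hμ]
        nlinarith
      exact mul_le_mul_of_nonneg_left this hLxy
    have hfin : Lxy * ((Lxy / μy) * ‖x - x'‖) ≤ 2 * Lxy ^ 2 / μy * ‖x - x'‖ := by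
      have h4 : Lxy * (Lxy / μy) ≤ 2 * Lxy ^ 2 / μy := by
        have e : Lxy * (Lxy / μy) = Lxy ^ 2 / μy := by ring
        have e2 : (0:ℝ) ≤ Lxy ^ 2 / μy := by positivity
        rw [e]
        have e3 : 2 * Lxy ^ 2 / μy = Lxy ^ 2 / μy + Lxy ^ 2 / μy := by ring
        rw [e3]; linarith
      calc Lxy * ((Lxy / μy) * ‖x - x'‖) = (Lxy * (Lxy / μy)) * ‖x - x'‖ := by ring
        _ ≤ 2 * Lxy ^ 2 / μy * ‖x - x'‖ :=
            mul_le_mul_of_nonneg_right h4 (norm_nonneg _)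
    calc ‖gx x (ystar x) - gx x' (ystar x')‖
        ≤ ‖gx x (ystar x) - gx x' (ystar x)‖ + ‖gx x' (ystar x) - gx x' (ystar x')‖ := htri
      _ ≤ Lxx * ‖x - x'‖ + 2 * Lxy ^ 2 / μy * ‖x - x'‖ := by
          have := le_trans h2 (le_trans h3 hfin); linarith
      _ = (Lxx + 2 * Lxy ^ 2 / μy) * ‖x - x'‖ := by ring
end

section
/- Under the assumptions that f(x,y) is μ_x-strongly convex in x, μ_y-strongly concave in y, with smoothness constants (L_{xx}, L_{xy}, L_{yy}), let g(x) = max_y f(x,y) and let ỹ_δ(x) satisfy g(x) - f(x, ỹ_δ(x)) ≤ δ. Then for all x, x' ∈ X: (μ_x/2)‖x - x'‖₂² ≤ g(x') - f(x, ỹ_δ(x)) - ⟨∇_x f(x, ỹ_δ(x)), x' - x⟩ ≤ L̂‖x' - x‖₂² + 2δ, where L̂ = 2(L_{xx} + 2L_{xy}²/μ_y). That is, (f(x, ỹ_δ(x)), ∇_x f(x, ỹ_δ(x))) constitutes a (2δ, 2L_g, μ_x)-inexact oracle for g. -/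
open RealInnerProductSpace

lemma quad_growth_aux {n : ℕ} (F : EuclideanSpace ℝ (Fin n) → ℝ)
    (G : EuclideanSpace ℝ (Fin n) → EuclideanSpace ℝ (Fin n)) (μ : ℝ)
    (ys : EuclideanSpace ℝ (Fin n))
    (hconc : ∀ y y', F y' ≤ F y + ⟪G y, y' - y⟫ - μ / 2 * ‖y' - y‖ ^ 2)
    (hmax : ∀ y, F y ≤ F ys) (w : EuclideanSpace ℝ (Fin n)) :
    μ / 4 * ‖w - ys‖ ^ 2 ≤ F ys - F w := by
  set m : EuclideanSpace ℝ (Fin n) := (2:ℝ)⁻¹ • (ys + w) with hm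
  have e1 : ys - m = (2:ℝ)⁻¹ • (ys - w) := by rw [hm]; module
  have e2 : w - m = -((2:ℝ)⁻¹ • (ys - w)) := by rw [hm]; module
  have h1 := hconc m ys
  have h2 := hconc m w
  have h3 := hmax m
  rw [e1] at h1
  rw [e2] at h2
  rw [inner_neg_right] at h2
  have n1 : ‖(2:ℝ)⁻¹ • (ys - w)‖ = (2:ℝ)⁻¹ * ‖ys - w‖ := by
    rw [norm_smul]; norm_num
  have n2 : ‖-((2:ℝ)⁻¹ • (ys - w))‖ = (2:ℝ)⁻¹ * ‖ys - w‖ := by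
    rw [norm_neg]; exact n1
  rw [n1] at h1
  rw [n2] at h2
  have n3 : ‖w - ys‖ = ‖ys - w‖ := norm_sub_rev _ _
  rw [n3]
  nlinarith [sq_nonneg (‖ys - w‖)]

set_option maxHeartbeats 1600000 in
/-- `(f(x,ỹ_δ(x)), ∇_x f(x,ỹ_δ(x)))` is a `(2δ, 2L_g, μ_x)`-inexact oracle for
`g(x) = max_y f(x,y)`, where `L_g = L_xx + 2L_xy²/μ_y`. -/
theorem inexact_oracle_for_g {nx ny : ℕ}
    (f : EuclideanSpace ℝ (Fin nx) → EuclideanSpace ℝ (Fin ny) → ℝ)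
    (gx : EuclideanSpace ℝ (Fin nx) → EuclideanSpace ℝ (Fin ny) → EuclideanSpace ℝ (Fin nx))
    (gy : EuclideanSpace ℝ (Fin nx) → EuclideanSpace ℝ (Fin ny) → EuclideanSpace ℝ (Fin ny))
    (X : Set (EuclideanSpace ℝ (Fin nx))) (hXconv : Convex ℝ X)
    (μx μy Lxx Lxy δ : ℝ) (hμx : 0 < μx) (hμy : 0 < μy)
    (hLxx : 0 ≤ Lxx) (hLxy : 0 ≤ Lxy) (hδ : 0 ≤ δ)
    (hstrx : ∀ y : EuclideanSpace ℝ (Fin ny), ∀ x ∈ X, ∀ x' ∈ X,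
      f x' y ≥ f x y + ⟪gx x y, x' - x⟫ + μx / 2 * ‖x' - x‖ ^ 2)
    (hconc : ∀ x, ∀ y y' : EuclideanSpace ℝ (Fin ny),
      f x y' ≤ f x y + ⟪gy x y, y' - y⟫ - μy / 2 * ‖y' - y‖ ^ 2)
    (hsmoothxx : ∀ x x' : EuclideanSpace ℝ (Fin nx), ∀ y,
      ‖gx x y - gx x' y‖ ≤ Lxx * ‖x - x'‖)
    (hsmoothxy : ∀ x, ∀ y y' : EuclideanSpace ℝ (Fin ny),
      ‖gx x y - gx x y'‖ ≤ Lxy * ‖y - y'‖)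
    (hcrossx : ∀ x x' : EuclideanSpace ℝ (Fin nx), ∀ y,
      ‖gy x y - gy x' y‖ ≤ Lxy * ‖x - x'‖)
    (ystar : EuclideanSpace ℝ (Fin nx) → EuclideanSpace ℝ (Fin ny))
    (hmax : ∀ x y, f x y ≤ f x (ystar x))
    (g : EuclideanSpace ℝ (Fin nx) → ℝ)
    (hg : ∀ x, g x = f x (ystar x))
    (ydel : EuclideanSpace ℝ (Fin nx) → EuclideanSpace ℝ (Fin ny))
    (hydel : ∀ x ∈ X, g x - f x (ydel x) ≤ δ) :
    ∀ x ∈ X, ∀ x' ∈ X,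
      μx / 2 * ‖x - x'‖ ^ 2 ≤
          g x' - f x (ydel x) - ⟪gx x (ydel x), x' - x⟫ ∧
        g x' - f x (ydel x) - ⟪gx x (ydel x), x' - x⟫ ≤
          2 * (Lxx + 2 * Lxy ^ 2 / μy) * ‖x' - x‖ ^ 2 + 2 * δ := by
  intro x hx x' hx'
  have hQG : ∀ z w, μy / 4 * ‖w - ystar z‖ ^ 2 ≤ f z (ystar z) - f z w :=
    fun z w => quad_growth_aux (f z) (gy z) μy (ystar z) (hconc z) (hmax z) w
  set yt := ydel x with hyt
  set y1 := ystar x with hy1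
  set y2 := ystar x' with hy2
  set r := ‖x' - x‖ with hr
  have hrxx : ‖x - x'‖ = r := norm_sub_rev _ _
  have hr0 : 0 ≤ r := norm_nonneg _
  constructor
  · -- lower bound
    have h1 := hstrx yt x hx x' hx'
    simp only [← hr] at h1
    have h2 : f x' yt ≤ g x' := by rw [hg]; exact hmax x' yt
    rw [hrxx]
    linarith
  · -- upper bound
    set e := ‖yt - y1‖ with he
    set d := ‖y2 - y1‖ with hd
    have he0 : 0 ≤ e := norm_nonneg _
    have hd0 : 0 ≤ d := norm_nonneg _
    -- e bound : μy * e^2 ≤ 4δ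
    have hE : μy * e ^ 2 ≤ 4 * δ := by
      have h := hQG x yt
      simp only [← hy1, ← he] at h
      have hgd := hydel x hx
      rw [hg] at hgd
      linarith
    -- d bound : μy/2 * d^2 ≤ Lxx*r^2 + Lxy*d*r
    have hDa := hQG x y2
    have hDb := hQG x' y1
    simp only [← hy1, ← hy2, ← hd] at hDa
    simp only [← hy1, ← hy2] at hDb
    have hdd : ‖y1 - y2‖ = d := norm_sub_rev _ _
    rw [hdd] at hDb
    have hA := hstrx y1 x hx x' hx'
    have hB := hstrx y2 x' hx' x hx
    simp only [← hr] at hA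
    have hBi : ⟪gx x' y2, x - x'⟫ = -⟪gx x' y2, x' - x⟫ := by
      rw [← inner_neg_right]; congr 1; abel
    rw [hBi, hrxx] at hB
    have hcs1 : ⟪gx x' y2, x' - x⟫ - ⟪gx x y1, x' - x⟫ ≤ (Lxx * r + Lxy * d) * r := by
      have h1 : ⟪gx x' y2 - gx x y1, x' - x⟫ ≤ ‖gx x' y2 - gx x y1‖ * r :=
        real_inner_le_norm _ _
      have h2 : ‖gx x' y2 - gx x y1‖ ≤ ‖gx x' y2 - gx x y2‖ + ‖gx x y2 - gx x y1‖ :=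
        norm_sub_le_norm_sub_add_norm_sub _ _ _
      have h3 := hsmoothxx x' x y2
      have h4 := hsmoothxy x y2 y1
      simp only [← hr] at h3
      simp only [← hd] at h4
      rw [inner_sub_left] at h1
      nlinarith
    have hD : μy / 2 * d ^ 2 ≤ Lxx * r ^ 2 + Lxy * d * r := by nlinarith
    -- main chain
    have hU1 : f x' y2 ≤ f x y2 + ⟪gx x' y2, x' - x⟫ - μx / 2 * r ^ 2 := by linarith
    have hcs2 : ⟪gx x' y2, x' - x⟫ ≤ ⟪gx x y2, x' - x⟫ + Lxx * r ^ 2 := by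
      have h1 : ⟪gx x' y2 - gx x y2, x' - x⟫ ≤ ‖gx x' y2 - gx x y2‖ * r :=
        real_inner_le_norm _ _
      have h3 := hsmoothxx x' x y2
      simp only [← hr] at h3
      rw [inner_sub_left] at h1
      nlinarith
    have hcs3 : ⟪gx x y2, x' - x⟫ ≤ ⟪gx x yt, x' - x⟫ + (Lxy * d * r + Lxy * e * r) := by
      have h1 : ⟪gx x y2 - gx x yt, x' - x⟫ ≤ ‖gx x y2 - gx x yt‖ * r :=
        real_inner_le_norm _ _
      have h2 : ‖gx x y2 - gx x yt‖ ≤ ‖gx x y2 - gx x y1‖ + ‖gx x y1 - gx x yt‖ :=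
        norm_sub_le_norm_sub_add_norm_sub _ _ _
      have h3 := hsmoothxy x y2 y1
      have h4 := hsmoothxy x y1 yt
      simp only [← hd] at h3
      have h5 : ‖y1 - yt‖ = e := norm_sub_rev _ _
      rw [h5] at h4
      rw [inner_sub_left] at h1
      nlinarith
    have hU2 : f x y2 ≤ f x yt + δ := by
      have h1 : f x y2 ≤ f x y1 := hmax x y2
      have h2 := hydel x hx
      rw [hg] at h2
      linarith
    have hgx' : g x' = f x' y2 := hg x'
    -- AM-GM pieces
    have hER : Lxy * e * r ≤ Lxy ^ 2 / μy * r ^ 2 + δ := by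
      rw [← sub_nonneg]
      have expand : Lxy ^ 2 / μy * r ^ 2 + δ - Lxy * e * r =
          (Lxy ^ 2 * r ^ 2 + μy * δ - μy * (Lxy * e * r)) / μy := by
        field_simp
      rw [expand]
      apply div_nonneg _ hμy.le
      nlinarith [sq_nonneg (μy * e - 2 * Lxy * r), mul_le_mul_of_nonneg_left hE hμy.le]
    have hDR : Lxy * d * r ≤ Lxx * r ^ 2 + 2 * (Lxy ^ 2 / μy * r ^ 2) := by
      rw [← sub_nonneg]
      have expand : Lxx * r ^ 2 + 2 * (Lxy ^ 2 / μy * r ^ 2) - Lxy * d * r =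
          (μy * (Lxx * r ^ 2) + 2 * Lxy ^ 2 * r ^ 2 - μy * (Lxy * d * r)) / μy := by
        field_simp
      rw [expand]
      apply div_nonneg _ hμy.le
      nlinarith [sq_nonneg (μy * d - 2 * Lxy * r), mul_le_mul_of_nonneg_left hD hμy.le]
    have hP0 : 0 ≤ Lxy ^ 2 / μy * r ^ 2 := by positivity
    have hfin : 2 * (Lxx + 2 * Lxy ^ 2 / μy) * r ^ 2 =
        2 * Lxx * r ^ 2 + 4 * (Lxy ^ 2 / μy * r ^ 2) := by ring
    rw [hfin]
    nlinarith [hU1, hcs2, hcs3, hU2, hER, hDR, hgx', hr0, sq_nonneg r]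
end

section
/- Let the sequences (α_k), (A_k) satisfy A_0 = 0, A_{k+1} = A_k + α_{k+1}, and A_{k+1}(1 + A_k μ) = L α_{k+1}² with L ≥ μ > 0 and α_{k+1} the largest root of this quadratic. Then A_N ≥ (1/(2L))·exp(((N-1)/2)·√(μ/L)) for all N ≥ 1. -/
/-!
Since `L α_{k+1}² = A_{k+1}(1 + μ A_k) ≥ μ A_k²`, every step satisfies `α_{k+1} ≥ √(μ/L) A_k`,
so `A_{k+1} ≥ (1 + q) A_k` with `q = √(μ/L) ≤ 1`. Starting from `A_1 = 1/L` this gives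
`A_N ≥ (1 + q)^{N-1} / L`, and `1 + q ≥ exp (q/2)` on `[0, 1]` finishes the estimate.
-/

open Real

lemma exp_half_le_one_add {q : ℝ} (hq0 : 0 ≤ q) (hq1 : q ≤ 1) : exp (q / 2) ≤ 1 + q := by
  have hsub : 0 < 1 - q / 2 := by linarith
  calc exp (q / 2) ≤ 1 / (1 - q / 2) := exp_bound_div_one_sub_of_interval (by linarith) (by linarith)
    _ ≤ 1 + q := by rw [div_le_iff₀ hsub]; nlinarith

/-- One step of the recursion, written in terms of `a = A_k`, `a' = A_{k+1}`, `a' - a = α_{k+1}`. -/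
lemma one_add_sqrt_mul_le_of_mul_one_add_eq {a a' L μ : ℝ} (hL : 0 < L) (hμ : 0 ≤ μ)
    (ha : 0 ≤ a) (haa' : a ≤ a') (hquad : a' * (1 + a * μ) = L * (a' - a) ^ 2) :
    (1 + √(μ / L)) * a ≤ a' := by
  have hsq : μ * a ^ 2 ≤ L * (a' - a) ^ 2 := by
    rw [← hquad]; nlinarith [mul_nonneg ha hμ]
  have hstep : √(μ / L) * a ≤ a' - a := by
    rw [← sq_le_sq₀ (by positivity) (by linarith), mul_pow, sq_sqrt (by positivity),
      div_mul_eq_mul_div, div_le_iff₀ hL]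
    linarith
  linarith

lemma pow_mul_le_of_mul_le_succ {A : ℕ → ℝ} {r : ℝ} (hr : 0 ≤ r) (h : ∀ k, r * A k ≤ A (k + 1))
    (n : ℕ) : r ^ n * A 0 ≤ A n := by
  induction n with
  | zero => simp
  | succ n ih =>
    calc r ^ (n + 1) * A 0 = r * (r ^ n * A 0) := by ring
      _ ≤ r * A n := mul_le_mul_of_nonneg_left ih hr
      _ ≤ A (n + 1) := h n

/-- Growth estimate for the coefficient sequence of the fast gradient method:
`A_N ≥ (1/(2L))·exp(((N-1)/2)√(μ/L))`. -/
theorem A_growth (A α : ℕ → ℝ) (L μ : ℝ) (hμ : 0 < μ) (hLμ : μ ≤ L)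
    (hA0 : A 0 = 0)
    (hArec : ∀ k, A (k + 1) = A k + α (k + 1))
    (hαpos : ∀ k, 0 < α (k + 1))
    (hquad : ∀ k, A (k + 1) * (1 + A k * μ) = L * α (k + 1) ^ 2) :
    ∀ N : ℕ, 1 ≤ N →
      A N ≥ 1 / (2 * L) * Real.exp (((N : ℝ) - 1) / 2 * Real.sqrt (μ / L)) := by
  have hL : 0 < L := hμ.trans_le hLμ
  set q := √(μ / L)
  have hq1 : q ≤ 1 := sqrt_le_one.mpr ((div_le_one hL).mpr hLμ)
  have hA_nonneg : ∀ k, 0 ≤ A k := by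
    intro k
    induction k with
    | zero => exact hA0.ge
    | succ k ih => linarith [hArec k, hαpos k]
  have hA1 : A 1 = 1 / L := by
    have hα1 := hαpos 0
    have h := hquad 0
    rw [hArec 0, hA0] at h ⊢
    field_simp
    nlinarith
  have hgeom : ∀ n, (1 + q) ^ n * (1 / L) ≤ A (n + 1) := by
    rw [← hA1]
    refine pow_mul_le_of_mul_le_succ (A := fun n ↦ A (n + 1)) (by positivity) fun k ↦ ?_
    refine one_add_sqrt_mul_le_of_mul_one_add_eq hL hμ.le (hA_nonneg _) ?_ ?_
    · linarith [hArec (k + 1), hαpos (k + 1)]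
    · rw [hquad (k + 1), hArec (k + 1)]; ring
  intro N hN
  obtain ⟨n, rfl⟩ := Nat.exists_eq_add_of_le' hN
  have hexp : exp (n * (q / 2)) ≤ (1 + q) ^ n := by
    rw [exp_nat_mul]
    exact pow_le_pow_left₀ (exp_pos _).le (exp_half_le_one_add (sqrt_nonneg _) hq1) n
  calc 1 / (2 * L) * exp ((((n + 1 : ℕ) : ℝ) - 1) / 2 * q)
      = 1 / L * (exp (n * (q / 2)) / 2) := by push_cast; ring_nf
    _ ≤ 1 / L * (1 + q) ^ n := by gcongr; linarith [exp_pos (n * (q / 2))]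
    _ ≤ A (n + 1) := by linarith [hgeom n]
end

section
/- Let (A_k)_{k≥0} be the coefficient sequence of the fast gradient method with constants L ≥ μ > 0 (satisfying A_{k+1}(1 + A_k μ) = L α_{k+1}², A_{k+1} = A_k + α_{k+1}). Then for every k, (Σ_{i=0}^{k} A_i)/A_k ≤ 1 + √(L/μ). -/
/-- Error-accumulation control for the fast gradient method coefficients:
`(∑_{i=0}^{k} A_i)/A_k ≤ 1 + √(L/μ)`. -/
theorem A_sum_ratio (A α : ℕ → ℝ) (L μ : ℝ) (hμ : 0 < μ) (hLμ : μ ≤ L)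
    (hA0 : A 0 = 0)
    (hArec : ∀ k, A (k + 1) = A k + α (k + 1))
    (hαpos : ∀ k, 0 < α (k + 1))
    (hquad : ∀ k, A (k + 1) * (1 + A k * μ) = L * α (k + 1) ^ 2) :
    ∀ k : ℕ, 1 ≤ k →
      (∑ i ∈ Finset.range (k + 1), A i) / A k ≤ 1 + Real.sqrt (L / μ) := by
  have hL : 0 < L := lt_of_lt_of_le hμ hLμ
  set s := Real.sqrt (μ / L) with hsdef
  have hspos : 0 < s := Real.sqrt_pos.2 (div_pos hμ hL)
  have hs2 : s ^ 2 = μ / L := Real.sq_sqrt (le_of_lt (div_pos hμ hL))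
  have hsle : s ≤ 1 := by
    rw [hsdef, show (1:ℝ) = Real.sqrt 1 by simp]
    exact Real.sqrt_le_sqrt (by rw [div_le_one hL]; exact hLμ)
  have hinv : Real.sqrt (L / μ) * s = 1 := by
    rw [hsdef, ← Real.sqrt_mul (by positivity)]
    rw [show L / μ * (μ / L) = 1 by field_simp]
    simp
  have hAnn : ∀ n, 0 ≤ A n := by
    intro n
    induction n with
    | zero => simp [hA0]
    | succ m ih => rw [hArec m]; nlinarith [hαpos m]
  have hApos : ∀ n, 0 < A (n + 1) := by
    intro n; rw [hArec n]; nlinarith [hαpos n, hAnn n]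
  have hgrow : ∀ n, A (n + 1) * (1 + s) ≤ A (n + 2) := by
    intro n
    have hq := hquad (n + 1)
    have hα : α (n + 2) = A (n + 2) - A (n + 1) := by
      have := hArec (n + 1); linarith
    have ha := hApos n
    have hb := hApos (n + 1)
    have hab : A (n + 1) ≤ A (n + 2) := by
      rw [hArec (n + 1)]; nlinarith [hαpos (n + 1)]
    have hμs : μ = s ^ 2 * L := by rw [hs2, div_mul_cancel₀ μ hL.ne']
    rw [hα] at hq
    -- key: μ * A(n+2) * A(n+1) ≤ L * (A(n+2) - A(n+1))^2
    have hkey : μ * A (n + 2) * A (n + 1) ≤ L * (A (n + 2) - A (n + 1)) ^ 2 := by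
      nlinarith
    rw [hμs] at hkey
    have hkey2 : s ^ 2 * (A (n + 2) * A (n + 1)) ≤ (A (n + 2) - A (n + 1)) ^ 2 := by
      have := (mul_le_mul_iff_of_pos_right hL).mp (by nlinarith : (s ^ 2 * (A (n + 2) * A (n + 1))) * L ≤ (A (n + 2) - A (n + 1)) ^ 2 * L)
      linarith
    nlinarith [sq_nonneg (A (n + 2) - A (n + 1) - s * A (n + 1)),
      sq_nonneg (A (n + 2) - A (n + 1) + s * A (n + 1)),
      mul_pos hspos hb]
  have hsum : ∀ k : ℕ, 1 ≤ k →
      (∑ i ∈ Finset.range (k + 1), A i) * s ≤ A k * (1 + s) := by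
    intro k hk
    induction k with
    | zero => omega
    | succ m ih =>
      rcases Nat.eq_or_lt_of_le hk with h1 | h1
      · -- m + 1 = 1, i.e. m = 0
        have hm : m = 0 := by omega
        subst hm
        simp [Finset.sum_range_succ, hA0]
        nlinarith [hApos 0]
      · have hm : 1 ≤ m := by omega
        have ihm := ih hm
        rw [Finset.sum_range_succ, add_mul]
        obtain ⟨p, rfl⟩ : ∃ p, m = p + 1 := ⟨m - 1, by omega⟩
        have hg := hgrow p
        nlinarith [hApos p, hApos (p + 1)]
  intro k hk
  have hAk : 0 < A k := by
    rcases Nat.exists_eq_add_of_le hk with ⟨m, rfl⟩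
    simpa [Nat.add_comm] using hApos m
  rw [div_le_iff₀ hAk]
  have h1 := hsum k hk
  -- (∑) * s ≤ A k * (1 + s) and √(L/μ) * s = 1
  nlinarith [mul_pos hAk hspos]
end
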